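/- arXiv:2001.03293 — 4 statements merged into one kernel-verified Lean document; each statement's English description precedes it below -/
import Mathlib

section
/- Let g : 𝔻 → ℂ be a convex univalent holomorphic function on the open unit disc 𝔻 with g(0) = 1 and Re g(ζ) > 0 for all ζ ∈ 𝔻. Define h : 𝔻 → ℂ by h(ζ) = (g(ζ) − 1)/ζ for ζ ≠ 0 and h(0) = g'(0). Then inf_{r ∈ (−1,1)} |h(r)| ≥ dist(1, ∂(g(𝔻))), i.e., the infimum of |g(r) − 1|/|r| over real r ∈ (−1,1)\{0} (together with |g'(0)|) is at least the distance from 1 to the boundary of the image g(𝔻). -/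
open Complex Metric Set Filter
open scoped Topology

theorem aux_deriv_ne (g : ℂ → ℂ) (hg : DifferentiableOn ℂ g (ball (0:ℂ) 1))
    (hginj : Set.InjOn g (ball (0:ℂ) 1)) : deriv g 0 ≠ 0 := by
  intro hder
  have h01 : (0:ℂ) ∈ ball (0:ℂ) 1 := mem_ball_self one_pos
  have han : AnalyticOnNhd ℂ g (ball (0:ℂ) 1) := hg.analyticOnNhd isOpen_ball
  set G : ℂ → ℂ := fun z => g z - g 0 with hGdef
  have hG : AnalyticAt ℂ G 0 := (han 0 h01).sub analyticAt_const
  have hGne : ¬ ∀ᶠ z in 𝓝 (0:ℂ), G z = 0 := by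
    intro hev
    rw [Metric.eventually_nhds_iff] at hev
    obtain ⟨ε, hε, hb⟩ := hev
    set z : ℂ := ((min ε 1 / 2 : ℝ) : ℂ) with hz
    have hz0 : z ≠ 0 := by
      simp only [hz, ne_eq, ofReal_eq_zero]
      positivity
    have hzabs : ‖z‖ = min ε 1 / 2 := by
      rw [hz, Complex.norm_real, Real.norm_eq_abs, abs_of_pos (by positivity)]
    have hz1 : z ∈ ball (0:ℂ) 1 := by
      rw [mem_ball_zero_iff, hzabs]
      have := min_le_right ε 1; linarith
    have hzd : dist z 0 < ε := by
      rw [dist_zero_right, hzabs]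
      have := min_le_left ε 1; linarith
    have := hb hzd
    have : g z = g 0 := by simpa [hGdef, sub_eq_zero] using this
    exact hz0 (hginj hz1 h01 this)
  have hotop : analyticOrderAt G 0 ≠ ⊤ := fun ht => hGne (analyticOrderAt_eq_top.mp ht)
  obtain ⟨n, hn⟩ : ∃ n : ℕ, analyticOrderAt G 0 = n := by
    obtain ⟨n, hn⟩ := WithTop.ne_top_iff_exists.mp hotop
    exact ⟨n, hn.symm⟩
  obtain ⟨u, huan, hu0, hev⟩ := (hG.analyticOrderAt_eq_natCast).mp hn
  have hev' : ∀ᶠ z in 𝓝 (0:ℂ), G z = z ^ n * u z := by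
    filter_upwards [hev] with z hz
    simpa [smul_eq_mul] using hz
  -- rule out n = 0
  have hn0 : n ≠ 0 := by
    intro h0
    have := hev'.self_of_nhds
    rw [h0] at this
    simp only [pow_zero, one_mul] at this
    rw [hGdef] at this
    simp at this
    exact hu0 (by rw [← this])
  -- rule out n = 1
  have hn1 : n ≠ 1 := by
    intro h1
    have hdG : deriv G 0 = deriv g 0 := by
      rw [hGdef]
      exact deriv_sub_const (g 0)
    have hu' : HasDerivAt u (deriv u 0) 0 := huan.differentiableAt.hasDerivAt
    have hmul : HasDerivAt (fun z : ℂ => z ^ n * u z) ((n : ℂ) * 0 ^ (n-1) * u 0 + 0 ^ n * deriv u 0) 0 := by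
      exact (hasDerivAt_pow n 0).mul hu'
    have hG' : deriv G 0 = (n : ℂ) * 0 ^ (n-1) * u 0 + 0 ^ n * deriv u 0 := by
      rw [Filter.EventuallyEq.deriv_eq hev']
      exact hmul.deriv
    rw [hdG, hder, h1] at hG'
    simp at hG'
    exact hu0 hG'.symm
  have hn2 : 2 ≤ n := by omega
  have hnne : (n : ℂ) ≠ 0 := Nat.cast_ne_zero.mpr (by omega)
  set c := u 0 with hcdef
  have hc : c ≠ 0 := hu0
  obtain ⟨p, hp⟩ := huan
  have hus : HasStrictDerivAt u (p 1 fun _ => 1) 0 := hp.hasStrictDerivAt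
  set w : ℂ → ℂ := fun z => Complex.exp ((n:ℂ)⁻¹ * Complex.log (u z / c)) with hwdef
  have hdiv : HasStrictDerivAt (fun z => u z / c) ((p 1 fun _ => 1)/c) 0 := hus.div_const c
  have h1slit : u 0 / c ∈ Complex.slitPlane := by
    rw [div_self hc]
    rw [Complex.mem_slitPlane_iff]
    left; norm_num
  have hw := ((hdiv.clog h1slit).const_mul ((n:ℂ)⁻¹)).cexp
  set ψ : ℂ → ℂ := fun z => z * w z with hψdef
  have hw0ne : w 0 ≠ 0 := Complex.exp_ne_zero _
  have hψ' : HasStrictDerivAt ψ (w 0) 0 := by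
    have := (hasStrictDerivAt_id (0:ℂ)).mul hw
    simp at this
    exact this
  have hψ0 : ψ 0 = 0 := zero_mul _
  have hmap : map ψ (𝓝 0) = 𝓝 (0:ℂ) := by
    have := hψ'.map_nhds_eq hw0ne
    rwa [hψ0] at this
  have huev : ∀ᶠ z in 𝓝 (0:ℂ), u z ≠ 0 := hp.analyticAt.continuousAt.eventually_ne hu0
  have hkey : ∀ᶠ z in 𝓝 (0:ℂ), z ∈ ball (0:ℂ) 1 ∧ g z = g 0 + c * ψ z ^ n := by
    filter_upwards [hev', huev, isOpen_ball.mem_nhds h01] with z hz1 hz2 hz3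
    refine ⟨hz3, ?_⟩
    have hwzn : w z ^ n = u z / c := by
      rw [hwdef]
      rw [← Complex.exp_nat_mul, ← mul_assoc, mul_inv_cancel₀ hnne, one_mul]
      exact Complex.exp_log (div_ne_zero hz2 hc)
    have : c * ψ z ^ n = z ^ n * u z := by
      rw [hψdef]
      simp only [mul_pow, hwzn]
      field_simp
    rw [this, ← hz1, hGdef]
    ring
  have himg : ψ '' {z | z ∈ ball (0:ℂ) 1 ∧ g z = g 0 + c * ψ z ^ n} ∈ 𝓝 (0:ℂ) := by
    rw [← hmap]
    exact image_mem_map hkey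
  obtain ⟨ε, hε, hbsub⟩ := Metric.mem_nhds_iff.mp himg
  set η : ℂ := ((ε/2 : ℝ) : ℂ) with hηdef
  have hηne : η ≠ 0 := by
    simp only [hηdef, ne_eq, ofReal_eq_zero]
    positivity
  have hηabs : ‖η‖ = ε/2 := by
    rw [hηdef, Complex.norm_real, Real.norm_eq_abs, abs_of_pos (by positivity)]
  set ω : ℂ := Complex.exp (((2 * Real.pi / n : ℝ) : ℂ) * Complex.I) with hωdef
  have hωabs : ‖ω‖ = 1 := Complex.norm_exp_ofReal_mul_I _
  have hωn : ω ^ n = 1 := by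
    rw [hωdef, ← Complex.exp_nat_mul]
    have heq : (n:ℂ) * (((2 * Real.pi / n : ℝ) : ℂ) * Complex.I) = 2 * (Real.pi:ℂ) * Complex.I := by
      push_cast
      field_simp
    rw [heq]
    exact Complex.exp_two_pi_mul_I
  have hωne : ω ≠ 1 := by
    intro hω1
    rw [hωdef] at hω1
    obtain ⟨k, hk⟩ := Complex.exp_eq_one_iff.mp hω1
    have hk' : ((2 * Real.pi / n : ℝ) : ℂ) = (k:ℂ) * (2 * Real.pi) := by
      have : ((2 * Real.pi / n : ℝ) : ℂ) * Complex.I = ((k:ℂ) * (2 * Real.pi)) * Complex.I := by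
        rw [hk]; ring
      exact mul_right_cancel₀ Complex.I_ne_zero this
    have hkr : (2 * Real.pi / n : ℝ) = (k:ℝ) * (2 * Real.pi) := by
      exact_mod_cast hk'
    have hkval : (k:ℝ) = 1/(n:ℝ) := by
      have hπ : (0:ℝ) < 2 * Real.pi := by positivity
      field_simp at hkr ⊢
      nlinarith [hkr]
    have hnr : (2:ℝ) ≤ (n:ℝ) := by exact_mod_cast hn2
    rcases le_or_gt k 0 with hk0 | hk0
    · have : (k:ℝ) ≤ 0 := by exact_mod_cast hk0
      rw [hkval] at this
      have : (0:ℝ) < 1/(n:ℝ) := by positivity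
      linarith
    · have : (1:ℝ) ≤ (k:ℝ) := by exact_mod_cast hk0
      rw [hkval] at this
      have : 1/(n:ℝ) ≤ 1/2 := by
        apply one_div_le_one_div_of_le <;> linarith
      linarith
  have hmem1 : η ∈ Metric.ball (0:ℂ) ε := by
    rw [mem_ball_zero_iff, hηabs]; linarith
  have hmem2 : η * ω ∈ Metric.ball (0:ℂ) ε := by
    rw [mem_ball_zero_iff, norm_mul]
    rw [hηabs]
    have : ‖ω‖ = 1 := hωabs
    rw [this]; linarith
  obtain ⟨ζ1, hζ1, hψ1⟩ := hbsub hmem1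
  obtain ⟨ζ2, hζ2, hψ2⟩ := hbsub hmem2
  have hgz : g ζ1 = g ζ2 := by
    rw [hζ1.2, hζ2.2, hψ1, hψ2, mul_pow, hωn, mul_one]
  have hζeq : ζ1 = ζ2 := hginj hζ1.1 hζ2.1 hgz
  rw [hζeq, hψ2] at hψ1
  have : ω = 1 := by
    have h' : η * ω = η * 1 := by rw [mul_one]; exact hψ1
    exact mul_left_cancel₀ hηne h'
  exact hωne this

theorem main_bound (g : ℂ → ℂ) (hg : DifferentiableOn ℂ g (ball (0:ℂ) 1))
    (hginj : Set.InjOn g (ball (0:ℂ) 1)) (z : ℂ) (hz : z ∈ ball (0:ℂ) 1) :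
    infDist (g 0) (frontier (g '' ball (0:ℂ) 1)) * ‖z‖
      ≤ ‖g z - g 0‖ := by
  have h01 : (0:ℂ) ∈ ball (0:ℂ) 1 := mem_ball_self one_pos
  set Ω := g '' ball (0:ℂ) 1 with hΩdef
  set d := infDist (g 0) (frontier Ω) with hddef
  rcases eq_or_ne z 0 with rfl | hz0
  · simp [norm_nonneg]
  have hzpos : 0 < ‖z‖ := norm_pos_iff.mpr hz0
  rcases le_or_gt d 0 with hd | hd
  · calc d * ‖z‖ ≤ 0 := mul_nonpos_of_nonpos_of_nonneg hd hzpos.le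
    _ ≤ _ := norm_nonneg _
  suffices hS : ∀ s : ℝ, 0 < s → s < d → s * ‖z‖ ≤ ‖g z - g 0‖ by
    by_contra hlt
    push_neg at hlt
    set s : ℝ := (‖g z - g 0‖ / ‖z‖ + d) / 2 with hsdef
    have h1 : ‖g z - g 0‖ / ‖z‖ < d := (div_lt_iff₀ hzpos).mpr hlt
    have hspos : 0 < s := by
      have : 0 ≤ ‖g z - g 0‖ / ‖z‖ := by positivity
      rw [hsdef]; linarith
    have hsd : s < d := by rw [hsdef]; linarith
    have := hS s hspos hsd
    rw [hsdef] at this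
    have h2 : ‖g z - g 0‖ / ‖z‖ * ‖z‖
        = ‖g z - g 0‖ := div_mul_cancel₀ _ hzpos.ne'
    nlinarith [this]
  intro s hs hsd
  -- open mapping
  have hopenmap : ∀ t ⊆ ball (0:ℂ) 1, IsOpen t → IsOpen (g '' t) := by
    rcases (hg.analyticOnNhd isOpen_ball).is_constant_or_isOpen
        (convex_ball (0:ℂ) 1).isPreconnected with ⟨w, hw⟩ | h
    · exfalso
      have hhalf : (1/2 : ℂ) ∈ ball (0:ℂ) 1 := by
        rw [mem_ball_zero_iff]; norm_num
      have : (0:ℂ) = 1/2 := hginj h01 hhalf (by rw [hw 0 h01, hw _ hhalf])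
      norm_num at this
    · exact h
  have hΩopen : IsOpen Ω := hopenmap _ subset_rfl isOpen_ball
  have hg0Ω : g 0 ∈ Ω := ⟨0, h01, rfl⟩
  -- ball of radius d around g 0 is inside Ω
  have hballd : ball (g 0) d ⊆ Ω := by
    have hsub : ball (g 0) d ⊆ Ω ∪ (closure Ω)ᶜ := by
      intro x hx
      by_cases hxc : x ∈ closure Ω
      · left
        by_contra hxo
        have hxf : x ∈ frontier Ω := hΩopen.frontier_eq ▸ ⟨hxc, hxo⟩
        have : d ≤ dist (g 0) x := infDist_le_dist_of_mem hxf
        rw [mem_ball, dist_comm] at hx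
        linarith
      · right; exact hxc
    have hdisj : Disjoint Ω (closure Ω)ᶜ :=
      Set.disjoint_left.mpr fun x hx hxc => hxc (subset_closure hx)
    rcases (convex_ball (g 0) d).isPreconnected.subset_or_subset hΩopen
        isClosed_closure.isOpen_compl hdisj hsub with h | h
    · exact h
    · exfalso
      exact (h (mem_ball_self hd)) (subset_closure hg0Ω)
  have hCsub : closedBall (g 0) s ⊆ Ω := (closedBall_subset_ball hsd).trans hballd
  -- compactness: preimage of closedBall is within a smaller disc
  have hρ : ∃ ρ0 : ℝ, ρ0 < 1 ∧ 0 < ρ0 ∧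
      ∀ ζ ∈ ball (0:ℂ) 1, g ζ ∈ closedBall (g 0) s → ‖ζ‖ < ρ0 := by
    set U : {ζ : ℂ // ζ ∈ ball (0:ℂ) 1} → Set ℂ :=
      fun i => g '' ball (0:ℂ) ((1 + ‖i.1‖)/2) with hUdef
    have hisub : ∀ i : {ζ : ℂ // ζ ∈ ball (0:ℂ) 1},
        ball (0:ℂ) ((1 + ‖i.1‖)/2) ⊆ ball (0:ℂ) 1 := by
      intro i
      apply ball_subset_ball
      have := mem_ball_zero_iff.mp i.2
      linarith
    have hUopen : ∀ i, IsOpen (U i) := fun i => hopenmap _ (hisub i) isOpen_ball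
    have hcover : closedBall (g 0) s ⊆ ⋃ i, U i := by
      intro w hw
      obtain ⟨ζ, hζ, rfl⟩ := hCsub hw
      refine mem_iUnion.mpr ⟨⟨ζ, hζ⟩, ⟨ζ, ?_, rfl⟩⟩
      rw [mem_ball_zero_iff]
      have := mem_ball_zero_iff.mp hζ
      linarith
    obtain ⟨t, ht⟩ := (isCompact_closedBall (g 0) s).elim_finite_subcover U hUopen hcover
    have htne : t.Nonempty := by
      rcases Finset.eq_empty_or_nonempty t with rfl | h
      · exfalso
        have := ht (mem_closedBall_self hs.le)
        simpa using this
      · exact h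
    refine ⟨t.sup' htne (fun i => (1 + ‖i.1‖)/2), ?_, ?_, ?_⟩
    · rw [Finset.sup'_lt_iff]
      intro i hi
      have := mem_ball_zero_iff.mp i.2
      linarith
    · obtain ⟨i0, hi0⟩ := htne
      refine lt_of_lt_of_le ?_ (Finset.le_sup' _ hi0)
      positivity
    · intro ζ hζ hgζ
      have hmem := ht hgζ
      rw [mem_iUnion₂] at hmem
      obtain ⟨i, hit, hiU⟩ := hmem
      obtain ⟨ζ', hζ', heq⟩ := hiU
      have hζeq : ζ = ζ' := hginj hζ (hisub i hζ') heq.symm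
      calc ‖ζ‖ = ‖ζ'‖ := by rw [hζeq]
        _ < (1 + ‖i.1‖)/2 := by
            have := mem_ball_zero_iff.mp hζ'
            exact this
        _ ≤ _ := by
            exact Finset.le_sup' (f := fun i : {ζ : ℂ // ζ ∈ ball (0:ℂ) 1} => (1 + ‖i.1‖)/2) hit
  obtain ⟨ρ0, hρ0lt, hρ0pos, hρ0prop⟩ := hρ
  set ρ : ℝ := max ρ0 ((‖z‖ + 1)/2) with hρdef
  have hz1 : ‖z‖ < 1 := by
    have := mem_ball_zero_iff.mp hz; exact this
  have hρlt1 : ρ < 1 := max_lt hρ0lt (by linarith)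
  have hρpos : 0 < ρ := lt_of_lt_of_le hρ0pos (le_max_left _ _)
  have hρ0le : ρ0 ≤ ρ := le_max_left _ _
  have hzρ : ‖z‖ ≤ ρ := le_trans (by linarith) (le_max_right _ _)
  -- dslope setup
  have hΨdiff : DifferentiableOn ℂ (dslope g 0) (ball (0:ℂ) 1) :=
    (differentiableOn_dslope (isOpen_ball.mem_nhds h01)).mpr hg
  have hder0 : deriv g 0 ≠ 0 := aux_deriv_ne g hg hginj
  have hΨne : ∀ ζ ∈ ball (0:ℂ) 1, dslope g 0 ζ ≠ 0 := by
    intro ζ hζ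
    rcases eq_or_ne ζ 0 with rfl | hζ0
    · rw [dslope_same]; exact hder0
    · rw [dslope_of_ne g hζ0]
      rw [slope_def_field]
      apply div_ne_zero
      · rw [sub_ne_zero]
        exact fun hgg => hζ0 (hginj hζ h01 hgg)
      · rwa [sub_zero]
  have hf : DifferentiableOn ℂ (fun ζ => (dslope g 0 ζ)⁻¹) (ball (0:ℂ) 1) :=
    hΨdiff.inv hΨne
  have hsub1 : ball (0:ℂ) ρ ⊆ ball (0:ℂ) 1 := ball_subset_ball hρlt1.le
  have hsub2 : closedBall (0:ℂ) ρ ⊆ ball (0:ℂ) 1 := closedBall_subset_ball hρlt1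
  have hdc : DiffContOnCl ℂ (fun ζ => (dslope g 0 ζ)⁻¹) (ball (0:ℂ) ρ) :=
    ⟨hf.mono hsub1, (hf.continuousOn).mono
      (by rw [closure_ball (0:ℂ) hρpos.ne']; exact hsub2)⟩
  have hbdd : ∀ ζ ∈ frontier (ball (0:ℂ) ρ), ‖(dslope g 0 ζ)⁻¹‖ ≤ ρ / s := by
    rw [frontier_ball (0:ℂ) hρpos.ne']
    intro ζ hζ
    have hζabs : ‖ζ‖ = ρ := by
      have := mem_sphere_zero_iff_norm.mp hζ
      exact this
    have hζball : ζ ∈ ball (0:ℂ) 1 := by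
      rw [mem_ball_zero_iff, hζabs]; exact hρlt1
    have hζ0 : ζ ≠ 0 := by
      intro h; rw [h] at hζabs; simp at hζabs; linarith
    have hnotC : g ζ ∉ closedBall (g 0) s := by
      intro hC
      have := hρ0prop ζ hζball hC
      rw [hζabs] at this
      linarith
    have hgs : s < ‖g ζ - g 0‖ := by
      rw [mem_closedBall, Complex.dist_eq] at hnotC
      linarith [not_le.mp hnotC]
    rw [dslope_of_ne g hζ0, slope_def_field, sub_zero]
    rw [norm_inv, norm_div]
    rw [inv_div, hζabs]
    exact div_le_div_of_nonneg_left hρpos.le hs hgs.le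
  have hzcl : z ∈ closure (ball (0:ℂ) ρ) := by
    rw [closure_ball (0:ℂ) hρpos.ne', mem_closedBall_zero_iff]
    exact hzρ
  have hbound := Complex.norm_le_of_forall_mem_frontier_norm_le isBounded_ball hdc hbdd hzcl
  -- conclude
  have hΨzne : dslope g 0 z ≠ 0 := hΨne z hz
  have hA : 0 < ‖dslope g 0 z‖ := norm_pos_iff.mpr hΨzne
  have hinv : (ρ / s)⁻¹ ≤ ‖dslope g 0 z‖ := by
    rw [norm_inv] at hbound
    have h2 := inv_anti₀ (inv_pos.mpr hA) hbound
    rwa [inv_inv] at h2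
  rw [inv_div] at hinv
  have hΨzval : dslope g 0 z * z = g z - g 0 := by
    rw [dslope_of_ne g hz0, slope_def_field, sub_zero, div_mul_cancel₀ _ hz0]
  have habs : ‖g z - g 0‖ = ‖dslope g 0 z‖ * ‖z‖ := by
    rw [← hΨzval, norm_mul]
  rw [habs]
  have hsρ : s ≤ s / ρ := by
    rw [le_div_iff₀ hρpos]
    nlinarith
  calc s * ‖z‖ ≤ (s/ρ) * ‖z‖ := by
        apply mul_le_mul_of_nonneg_right hsρ hzpos.le
    _ ≤ ‖dslope g 0 z‖ * ‖z‖ := mul_le_mul_of_nonneg_right hinv hzpos.le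

theorem stmt0 (g : ℂ → ℂ)
    (hg : DifferentiableOn ℂ g (ball (0:ℂ) 1))
    (hginj : InjOn g (ball (0:ℂ) 1))
    (hconv : Convex ℝ (g '' ball (0:ℂ) 1))
    (hg0 : g 0 = 1)
    (hre : ∀ ζ ∈ ball (0:ℂ) 1, 0 < (g ζ).re)
    (h : ℂ → ℂ)
    (hh : ∀ ζ : ℂ, h ζ = if ζ = 0 then deriv g 0 else (g ζ - 1) / ζ) :
    ∀ r : ℝ, -1 < r → r < 1 →
      infDist 1 (frontier (g '' ball (0:ℂ) 1)) ≤ ‖h (r : ℂ)‖ := by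
  intro r hr1 hr2
  have h01 : (0:ℂ) ∈ ball (0:ℂ) 1 := mem_ball_self one_pos
  set d := infDist (1:ℂ) (frontier (g '' ball (0:ℂ) 1)) with hddef
  have hmb : ∀ z ∈ ball (0:ℂ) 1, d * ‖z‖ ≤ ‖g z - 1‖ := by
    intro z hz
    have := main_bound g hg hginj z hz
    rwa [hg0] at this
  rcases eq_or_ne r 0 with rfl | hr0
  · have hcast : ((0:ℝ):ℂ) = 0 := by norm_num
    rw [hcast, hh 0, if_pos rfl]
    have hda : DifferentiableAt ℂ g 0 := hg.differentiableAt (isOpen_ball.mem_nhds h01)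
    have hslope := hasDerivAt_iff_tendsto_slope.mp hda.hasDerivAt
    have habs : Tendsto (fun z => ‖slope g 0 z‖) (𝓝[≠] (0:ℂ))
        (𝓝 (‖deriv g 0‖)) :=
      (continuous_norm.continuousAt.tendsto).comp hslope
    apply ge_of_tendsto habs
    have hev1 : ∀ᶠ z in 𝓝[≠] (0:ℂ), z ∈ ball (0:ℂ) 1 :=
      eventually_nhdsWithin_of_eventually_nhds
        (by filter_upwards [isOpen_ball.mem_nhds h01] with a ha using ha)
    filter_upwards [hev1, self_mem_nhdsWithin] with z hz1 hz2
    have hz0 : z ≠ 0 := hz2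
    have hzpos : 0 < ‖z‖ := norm_pos_iff.mpr hz0
    rw [slope_def_field, sub_zero, hg0, norm_div, le_div_iff₀ hzpos]
    exact hmb z hz1
  · have hrC : ((r:ℝ):ℂ) ≠ 0 := by
      simp only [ne_eq, ofReal_eq_zero]
      exact hr0
    rw [hh, if_neg hrC]
    have hzb : ((r:ℝ):ℂ) ∈ ball (0:ℂ) 1 := by
      rw [mem_ball_zero_iff, Complex.norm_real, Real.norm_eq_abs]
      exact abs_lt.mpr ⟨hr1, hr2⟩
    have hzpos : 0 < ‖((r:ℝ):ℂ)‖ := norm_pos_iff.mpr hrC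
    rw [norm_div, le_div_iff₀ hzpos]
    exact hmb _ hzb
end

section
/- Let Ω ⊆ ℂ be an open convex set with 1 ∈ Ω, let d = dist(1, ∂Ω), and let c ∈ ℂ with |c| ≤ (3√3/2)·d. Define h : 𝔹² → ℂ² on the Euclidean unit ball 𝔹² of ℂ² by h(z) = (z₁ + c z₂², z₂). Then for every z ∈ 𝔹² with z ≠ 0, the quantity ⟨h(z), z⟩/‖z‖² lies in Ω, where ⟨·,·⟩ is the Hermitian inner product on ℂ². -/
open Complex Metric Set

theorem stmt8 (Ω : Set ℂ) (hΩo : IsOpen Ω) (hΩc : Convex ℝ Ω) (h1 : (1:ℂ) ∈ Ω)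
    (d : ℝ) (hd : d = infDist 1 (frontier Ω))
    (c : ℂ) (hc : ‖c‖ ≤ (3 * Real.sqrt 3 / 2) * d)
    (z₁ z₂ : ℂ) (hz : ‖z₁‖ ^ 2 + ‖z₂‖ ^ 2 < 1)
    (hz0 : ¬(z₁ = 0 ∧ z₂ = 0)) :
    ((z₁ + c * z₂ ^ 2) * (starRingEnd ℂ) z₁ + z₂ * (starRingEnd ℂ) z₂) /
        ((‖z₁‖ ^ 2 + ‖z₂‖ ^ 2 : ℝ) : ℂ) ∈ Ω := by
  set a := ‖z₁‖ with ha
  set b := ‖z₂‖ with hb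
  set N : ℝ := a ^ 2 + b ^ 2 with hN
  have ha0 : 0 ≤ a := norm_nonneg _
  have hb0 : 0 ≤ b := norm_nonneg _
  have hNpos : 0 < N := by
    rcases not_and_or.mp hz0 with h | h
    · have : 0 < a := norm_pos_iff.mpr h
      positivity
    · have : 0 < b := norm_pos_iff.mpr h
      positivity
  have hNne : (N : ℂ) ≠ 0 := by exact_mod_cast ne_of_gt hNpos
  have hzz : z₁ * (starRingEnd ℂ) z₁ + z₂ * (starRingEnd ℂ) z₂ = (N : ℂ) := by
    rw [Complex.mul_conj, Complex.mul_conj]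
    push_cast [Complex.normSq_eq_norm_sq]
    simp only [hN, ha, hb]
    push_cast
    ring
  have hval : ((z₁ + c * z₂ ^ 2) * (starRingEnd ℂ) z₁ + z₂ * (starRingEnd ℂ) z₂) /
        ((N : ℝ) : ℂ) = 1 + c * z₂ ^ 2 * (starRingEnd ℂ) z₁ / (N : ℂ) := by
    field_simp
    linear_combination hzz
  rw [hval]
  -- the error term has absolute value |c| * b^2 * a / N
  by_cases hc0 : c = 0
  · simpa [hc0] using h1
  · have hdpos : 0 < d := by
      have : 0 < ‖c‖ := norm_pos_iff.mpr hc0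
      nlinarith [Real.sqrt_nonneg 3, this.trans_le hc]
    -- key inequality: (3√3/2) * (a * b^2) < N
    have hs3 : Real.sqrt 3 ^ 2 = 3 := Real.sq_sqrt (by norm_num)
    have hkey : 3 * Real.sqrt 3 / 2 * (a * b ^ 2) < N := by
      rcases eq_or_lt_of_le ha0 with h | hapos
      · simp [← h]; exact hNpos
      rcases eq_or_lt_of_le hb0 with h | hbpos
      · simp [← h]; exact hNpos
      have h1 : (3 * Real.sqrt 3 / 2 * (a * b ^ 2)) ^ 2 ≤ N ^ 3 := by
        have heq : (3 * Real.sqrt 3 / 2 * (a * b ^ 2)) ^ 2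
            = 27 / 4 * (a ^ 2 * (b ^ 2) ^ 2) := by
          linear_combination (9 / 4 * a ^ 2 * b ^ 4) * hs3
        rw [heq]
        nlinarith [sq_nonneg (2 * a ^ 2 - b ^ 2), sq_nonneg a, sq_nonneg b]
      have h2 : N ^ 3 < N ^ 2 := by
        have := mul_lt_mul_of_pos_left hz (by positivity : (0:ℝ) < N ^ 2)
        nlinarith
      have h3 : (3 * Real.sqrt 3 / 2 * (a * b ^ 2)) ^ 2 < N ^ 2 := lt_of_le_of_lt h1 h2
      have hpos : 0 ≤ 3 * Real.sqrt 3 / 2 * (a * b ^ 2) := by positivity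
      nlinarith
    have herr : ‖(c * z₂ ^ 2 * (starRingEnd ℂ) z₁ / (N : ℂ))‖ < d := by
      rw [norm_div, norm_mul, norm_mul, norm_pow]
      simp only [Complex.norm_conj]
      rw [Complex.norm_real, Real.norm_eq_abs, abs_of_pos hNpos]
      rw [div_lt_iff₀ hNpos]
      calc ‖c‖ * b ^ 2 * a ≤ 3 * Real.sqrt 3 / 2 * d * (b ^ 2 * a) := by
            nlinarith [mul_le_mul_of_nonneg_right hc (show (0:ℝ) ≤ b ^ 2 * a by positivity)]
        _ = d * (3 * Real.sqrt 3 / 2 * (a * b ^ 2)) := by ring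
        _ < d * N := by exact mul_lt_mul_of_pos_left hkey hdpos
    -- ball 1 d ⊆ Ω
    have hΩne : Ω ≠ univ := by
      intro h
      have : frontier Ω = ∅ := by rw [h, frontier_univ]
      rw [this, Metric.infDist_empty] at hd
      exact absurd hd (by linarith)
    obtain ⟨y, hy, hyd⟩ := exists_mem_frontier_infDist_compl_eq_dist h1 hΩne
    have hsub : Metric.ball (1 : ℂ) d ⊆ Ω := by
      have hle : d ≤ infDist 1 Ωᶜ := by
        rw [hyd, hd]
        exact Metric.infDist_le_dist_of_mem hy
      exact (Metric.ball_subset_ball hle).trans Metric.ball_infDist_compl_subset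
    apply hsub
    rw [Metric.mem_ball, dist_eq, add_sub_cancel_left]
    exact herr
end

section
/- Let g : 𝔻 → ℂ be holomorphic with g(0) = 1, Re g(ζ) > 0 for ζ ∈ 𝔻, g(\bar{ζ}) = \overline{g(ζ)} for all ζ ∈ 𝔻, and suppose there exist M > 0 and ρ₀ ∈ (1/2,1) such that 0 < g(ρ) ≤ M(1 − ρ) for all ρ ∈ (ρ₀, 1). Let b : 𝔻 → ℂ be holomorphic with b(0) = 0, b'(0) = 1, b(ζ) ≠ 0 for ζ ≠ 0, and ζ b'(ζ)/b(ζ) = 1/g(ζ) for ζ ∈ 𝔻. Then b(ρ) → ∞ as ρ → 1⁻; in particular b is unbounded on 𝔻. -/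
open Complex Metric Set Filter
open Topology

theorem stmt13 (g b : ℂ → ℂ)
    (hg : DifferentiableOn ℂ g (ball (0:ℂ) 1))
    (hg0 : g 0 = 1)
    (hre : ∀ ζ ∈ ball (0:ℂ) 1, 0 < (g ζ).re)
    (hsym : ∀ ζ ∈ ball (0:ℂ) 1, g ((starRingEnd ℂ) ζ) = (starRingEnd ℂ) (g ζ))
    (M ρ₀ : ℝ) (hM : 0 < M) (hρ₀ : ρ₀ ∈ Ioo (1/2 : ℝ) 1)
    (hgrowth : ∀ ρ : ℝ, ρ₀ < ρ → ρ < 1 →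
      0 < (g (ρ:ℂ)).re ∧ (g (ρ:ℂ)).re ≤ M * (1 - ρ))
    (hb : DifferentiableOn ℂ b (ball (0:ℂ) 1))
    (hb0 : b 0 = 0) (hb1 : deriv b 0 = 1)
    (hbne : ∀ ζ ∈ ball (0:ℂ) 1, ζ ≠ 0 → b ζ ≠ 0)
    (hode : ∀ ζ ∈ ball (0:ℂ) 1, ζ ≠ 0 → ζ * deriv b ζ / b ζ = 1 / g ζ) :
    Tendsto (fun ρ : ℝ => ‖b (ρ:ℂ)‖) (nhdsWithin 1 (Iio (1:ℝ))) atTop ∧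
      ¬ ∃ K : ℝ, ∀ ζ ∈ ball (0:ℂ) 1, ‖b ζ‖ ≤ K := by
  obtain ⟨hρ₀half, hρ₀1⟩ := hρ₀
  -- membership of real points in the ball
  have hmem : ∀ ρ : ℝ, ρ₀ < ρ → ρ < 1 → (ρ:ℂ) ∈ ball (0:ℂ) 1 := by
    intro ρ h1 h2
    have hρpos : (0:ℝ) < ρ := by linarith
    simp only [mem_ball_zero_iff, Complex.norm_real, Real.norm_eq_abs,
      abs_of_pos hρpos]
    exact h2
  -- g is real on (ρ₀,1)
  have hgreal : ∀ ρ : ℝ, ρ₀ < ρ → ρ < 1 → g (ρ:ℂ) = (((g (ρ:ℂ)).re : ℝ) : ℂ) := by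
    intro ρ h1 h2
    have h := hsym (ρ:ℂ) (hmem ρ h1 h2)
    rw [Complex.conj_ofReal] at h
    have him : (g (ρ:ℂ)).im = 0 := by
      have := congrArg Complex.im h
      simp at this
      linarith
    exact (Complex.re_add_im (g (ρ:ℂ))).symm.trans (by rw [him]; simp)
  -- the comparison function
  set F : ℝ → ℝ := fun t => Real.log (Complex.normSq (b (t:ℂ))) + (2/M) * Real.log (1 - t)
    with hFdef
  -- derivative of F on (ρ₀,1)
  have hFderiv : ∀ ρ ∈ Ioo ρ₀ (1:ℝ),
      HasDerivAt F (2/(ρ * (g (ρ:ℂ)).re) - (2/M)/(1-ρ)) ρ := by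
    intro ρ hρ
    obtain ⟨h1, h2⟩ := hρ
    have hρpos : (0:ℝ) < ρ := by linarith
    have hρne : (ρ:ℂ) ≠ 0 := by
      simp only [ne_eq, Complex.ofReal_eq_zero]; positivity
    have hmemρ := hmem ρ h1 h2
    have hgr := hgrowth ρ h1 h2
    set gr : ℝ := (g (ρ:ℂ)).re with hgrdef
    have hgrpos : 0 < gr := hgr.1
    have hz : b (ρ:ℂ) ≠ 0 := hbne _ hmemρ hρne
    set z : ℂ := b (ρ:ℂ) with hzdef
    set z' : ℂ := deriv b (ρ:ℂ) with hz'def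
    -- derivative of t ↦ b t
    have hbd : HasDerivAt (fun t : ℝ => b (t:ℂ)) z' ρ :=
      ((hb.differentiableAt (isOpen_ball.mem_nhds hmemρ)).hasDerivAt).comp_ofReal
    -- from the ODE: z' = c • z with real c = (ρ * gr)⁻¹
    set c : ℝ := (ρ * gr)⁻¹ with hcdef
    have hode' := hode (ρ:ℂ) hmemρ hρne
    rw [hgreal ρ h1 h2] at hode'
    have hz' : z' = (c:ℂ) * z := by
      have hgrne : ((gr:ℝ):ℂ) ≠ 0 := by
        simp only [ne_eq, Complex.ofReal_eq_zero]; positivity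
      have h := hode'
      rw [← hzdef, ← hz'def, ← hgrdef, div_eq_iff hz] at h
      rw [hcdef]
      push_cast
      apply mul_left_cancel₀ hρne
      rw [h]
      field_simp
    -- derivative of normSq (b t)
    have hre' : HasDerivAt (fun t : ℝ => (b (t:ℂ)).re) z'.re ρ :=
      Complex.reCLM.hasFDerivAt.comp_hasDerivAt ρ hbd
    have him' : HasDerivAt (fun t : ℝ => (b (t:ℂ)).im) z'.im ρ :=
      Complex.imCLM.hasFDerivAt.comp_hasDerivAt ρ hbd
    have hN : HasDerivAt (fun t : ℝ => Complex.normSq (b (t:ℂ)))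
        (z'.re * z.re + z.re * z'.re + (z'.im * z.im + z.im * z'.im)) ρ := by
      have := (hre'.mul hre').add (him'.mul him')
      simp only [Complex.normSq_apply]
      exact this
    have hNval : z'.re * z.re + z.re * z'.re + (z'.im * z.im + z.im * z'.im)
        = 2 * c * Complex.normSq z := by
      have h1 : z'.re = c * z.re := by rw [hz']; simp
      have h2 : z'.im = c * z.im := by rw [hz']; simp
      rw [h1, h2, Complex.normSq_apply]; ring
    have hNpos : 0 < Complex.normSq z := Complex.normSq_pos.mpr hz
    have hlogN : HasDerivAt (fun t : ℝ => Real.log (Complex.normSq (b (t:ℂ))))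
        ((2 * c * Complex.normSq z) / Complex.normSq z) ρ := by
      rw [← hNval]
      exact hN.log (by rw [← hzdef]; exact hNpos.ne')
    have hlog1 : HasDerivAt (fun t : ℝ => (2/M) * Real.log (1 - t))
        ((2/M) * ((-1)/(1-ρ))) ρ := by
      have h1t : HasDerivAt (fun t : ℝ => 1 - t) (-1) ρ := by
        simpa using (hasDerivAt_id ρ).const_sub 1
      exact (h1t.log (by intro h; linarith [sub_eq_zero.mp h])).const_mul _
    have := hlogN.add hlog1
    refine this.congr_deriv ?_
    have : (2 * c * Complex.normSq z) / Complex.normSq z = 2 * c := by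
      field_simp
    rw [this, hcdef]
    field_simp
    ring
  -- derivative is nonnegative
  have hFnonneg : ∀ ρ ∈ Ioo ρ₀ (1:ℝ), 0 ≤ 2/(ρ * (g (ρ:ℂ)).re) - (2/M)/(1-ρ) := by
    intro ρ hρ
    obtain ⟨h1, h2⟩ := hρ
    obtain ⟨hgrpos, hgrle⟩ := hgrowth ρ h1 h2
    have hρpos : (0:ℝ) < ρ := by linarith
    have h1ρ : (0:ℝ) < 1 - ρ := by linarith
    have key : ρ * (g (ρ:ℂ)).re ≤ M * (1 - ρ) := by
      calc ρ * (g (ρ:ℂ)).re ≤ 1 * (g (ρ:ℂ)).re := by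
            apply mul_le_mul_of_nonneg_right (le_of_lt h2) hgrpos.le
        _ = (g (ρ:ℂ)).re := one_mul _
        _ ≤ M * (1 - ρ) := hgrle
    have hpos1 : 0 < ρ * (g (ρ:ℂ)).re := by positivity
    have : (2:ℝ)/(M * (1-ρ)) ≤ 2/(ρ * (g (ρ:ℂ)).re) :=
      div_le_div_of_nonneg_left (by norm_num) hpos1 key
    have heq : (2/M)/(1-ρ) = 2/(M * (1-ρ)) := by
      field_simp
    linarith
  -- monotonicity of F on (ρ₀,1)
  have hmono : MonotoneOn F (Ioo ρ₀ (1:ℝ)) := by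
    apply monotoneOn_of_deriv_nonneg (convex_Ioo _ _)
    · intro x hx
      exact (hFderiv x hx).continuousAt.continuousWithinAt
    · rw [interior_Ioo]
      intro x hx
      exact (hFderiv x hx).differentiableAt.differentiableWithinAt
    · rw [interior_Ioo]
      intro x hx
      rw [(hFderiv x hx).deriv]
      exact hFnonneg x hx
  -- base point
  set ρ₁ : ℝ := (ρ₀ + 1)/2 with hρ₁def
  have hρ₁l : ρ₀ < ρ₁ := by rw [hρ₁def]; linarith
  have hρ₁u : ρ₁ < 1 := by rw [hρ₁def]; linarith
  have hlb : ∀ ρ ∈ Ioo ρ₁ (1:ℝ),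
      F ρ₁ - (2/M) * Real.log (1 - ρ) ≤ Real.log (Complex.normSq (b (ρ:ℂ))) := by
    intro ρ hρ
    have h := hmono ⟨hρ₁l, hρ₁u⟩ ⟨by linarith [hρ.1], hρ.2⟩ hρ.1.le
    rw [hFdef] at h
    simp only at h
    linarith
  -- tendsto of the lower bound
  have htlog : Tendsto (fun ρ : ℝ => Real.log (1 - ρ)) (𝓝[<] (1:ℝ)) atBot := by
    apply Real.tendsto_log_nhdsGT_zero.comp
    have h1 : Tendsto (fun ρ : ℝ => 1 - ρ) (𝓝[<] (1:ℝ)) (𝓝 0) := by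
      have h0 : Tendsto (fun ρ : ℝ => 1 - ρ) (𝓝 (1:ℝ)) (𝓝 (1 - 1)) :=
        tendsto_const_nhds.sub tendsto_id
      simpa using h0.mono_left nhdsWithin_le_nhds
    rw [tendsto_nhdsWithin_iff]
    refine ⟨h1, ?_⟩
    filter_upwards [self_mem_nhdsWithin] with x hx
    simp only [mem_Ioi]
    exact sub_pos.mpr hx
  have htw : Tendsto (fun ρ : ℝ => F ρ₁ - (2/M) * Real.log (1 - ρ)) (𝓝[<] (1:ℝ)) atTop := by
    apply tendsto_atTop_add_const_left
    have h2 : Tendsto (fun ρ : ℝ => (2/M) * Real.log (1 - ρ)) (𝓝[<] (1:ℝ)) atBot :=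
      Tendsto.const_mul_atBot (by positivity) htlog
    have h3 := tendsto_neg_atBot_atTop.comp h2
    simpa [Function.comp_def] using h3
  have hIoomem : Ioo ρ₁ (1:ℝ) ∈ 𝓝[<] (1:ℝ) := Ioo_mem_nhdsLT_of_mem ⟨hρ₁u, le_refl _⟩
  have htu : Tendsto (fun ρ : ℝ => Real.log (Complex.normSq (b (ρ:ℂ)))) (𝓝[<] (1:ℝ)) atTop := by
    apply tendsto_atTop_mono' _ _ htw
    filter_upwards [hIoomem] with ρ hρ
    exact hlb ρ hρ
  have htN : Tendsto (fun ρ : ℝ => Complex.normSq (b (ρ:ℂ))) (𝓝[<] (1:ℝ)) atTop := by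
    have := Real.tendsto_exp_atTop.comp htu
    apply this.congr'
    filter_upwards [hIoomem] with ρ hρ
    have hρne : (ρ:ℂ) ≠ 0 := by
      simp only [ne_eq, Complex.ofReal_eq_zero]
      have : (0:ℝ) < ρ := by linarith [hρ.1]
      positivity
    have hz : b (ρ:ℂ) ≠ 0 := hbne _ (hmem ρ (by linarith [hρ.1]) hρ.2) hρne
    simp only [Function.comp_apply]
    exact Real.exp_log (Complex.normSq_pos.mpr hz)
  have htabs : Tendsto (fun ρ : ℝ => ‖b (ρ:ℂ)‖) (𝓝[<] (1:ℝ)) atTop := by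
    have hsq : Tendsto Real.sqrt atTop atTop := by
      apply tendsto_atTop_atTop_of_monotone (fun a b h => Real.sqrt_le_sqrt h)
      intro c
      exact ⟨c^2, by rw [Real.sqrt_sq_eq_abs]; exact le_abs_self c⟩
    have := hsq.comp htN
    apply this.congr
    intro ρ
    exact (Complex.norm_def _).symm
  refine ⟨htabs, ?_⟩
  rintro ⟨K, hK⟩
  have hev : ∀ᶠ ρ : ℝ in 𝓝[<] (1:ℝ), K < ‖b (ρ:ℂ)‖ :=
    htabs.eventually_gt_atTop K
  have hev2 : ∀ᶠ ρ : ℝ in 𝓝[<] (1:ℝ), ‖b (ρ:ℂ)‖ ≤ K := by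
    filter_upwards [hIoomem] with ρ hρ
    exact hK _ (hmem ρ (by linarith [hρ.1]) hρ.2)
  obtain ⟨ρ, h1, h2⟩ := (hev.and hev2).exists
  linarith
end

section
/- Let Ω ⊆ ℂ be a convex open set with 1 ∈ Ω. Suppose p : 𝔻̂ → ℂ is a function of two complex variables, holomorphic in each, of the form p(z₁, z₂) = 1 + Σ_{|α| ≥ 2} q_α z^α / z₁ (convergent for |z₁| = |z₂| = ρ < 1), such that p(z₁, z₂) ∈ Ω whenever |z₁| = |z₂| = ρ ∈ (0,1). Then for every ρ ∈ (0,1) and λ ∈ [0, 2π): (1/(4π)) ∫₀^{4π} p(ρ e^{i(η + θ − λ)}, ρ e^{iθ/2}) dθ = 1 + |q_{0,2}| ρ e^{iλ} ∈ closure(Ω), where q_{0,2} = |q_{0,2}| e^{iη}. Consequently |q_{0,2}| ≤ dist(1, ∂Ω). -/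
open Complex Metric Set Real MeasureTheory

lemma auxG (q : ℂ) (ρ η lam θ : ℝ) (a b : ℕ) (hab : 2 ≤ a + b) :
    q * ((ρ:ℂ) * Complex.exp (((η + θ - lam : ℝ):ℂ) * I)) ^ a *
        ((ρ:ℂ) * Complex.exp (((θ/2 : ℝ):ℂ) * I)) ^ b /
        ((ρ:ℂ) * Complex.exp (((η + θ - lam : ℝ):ℂ) * I))
      = (q * (ρ:ℂ)^(a+b) / (ρ:ℂ) * Complex.exp (((((a:ℝ)-1)*(η-lam) : ℝ):ℂ) * I)) *
        Complex.exp (((2*a+b-2 : ℕ):ℂ)/2 * θ * I) := by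
  have hk : ((2*a+b-2 : ℕ):ℂ) = 2*(a:ℂ) + (b:ℂ) - 2 := by
    have h2 : 2 ≤ 2*a + b := by omega
    push_cast [Nat.cast_sub h2]; ring
  have e3 : ((a:ℂ) * (((η + θ - lam : ℝ):ℂ) * I) + (b:ℂ) * (((θ/2 : ℝ):ℂ) * I)) -
      ((η + θ - lam : ℝ):ℂ) * I
      = ((((a:ℝ)-1)*(η-lam) : ℝ):ℂ) * I + ((2*a+b-2 : ℕ):ℂ)/2 * (θ:ℂ) * I := by
    rw [hk]; push_cast; ring
  rw [mul_pow, mul_pow, ← Complex.exp_nat_mul, ← Complex.exp_nat_mul]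
  calc q * ((ρ:ℂ)^a * Complex.exp ((a:ℂ) * (((η + θ - lam : ℝ):ℂ) * I))) *
        ((ρ:ℂ)^b * Complex.exp ((b:ℂ) * (((θ/2 : ℝ):ℂ) * I))) /
        ((ρ:ℂ) * Complex.exp (((η + θ - lam : ℝ):ℂ) * I))
      = q * (ρ:ℂ)^(a+b) / (ρ:ℂ) *
        (Complex.exp ((a:ℂ) * (((η + θ - lam : ℝ):ℂ) * I)) *
         Complex.exp ((b:ℂ) * (((θ/2 : ℝ):ℂ) * I)) /
         Complex.exp (((η + θ - lam : ℝ):ℂ) * I)) := by rw [pow_add]; ring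
    _ = q * (ρ:ℂ)^(a+b) / (ρ:ℂ) *
        Complex.exp (((((a:ℝ)-1)*(η-lam) : ℝ):ℂ) * I + ((2*a+b-2 : ℕ):ℂ)/2 * (θ:ℂ) * I) := by
        rw [← Complex.exp_add, ← Complex.exp_sub, e3]
    _ = _ := by rw [Complex.exp_add]; ring

lemma auxA (k : ℕ) (hk : k ≠ 0) :
    ∫ θ in (0:ℝ)..(4*π), Complex.exp ((k:ℂ)/2 * θ * I) = 0 := by
  have hc : ((k:ℂ)/2 * I) ≠ 0 := by
    simp [Complex.ext_iff, hk, div_eq_zero_iff]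
  have h1 : ∀ θ : ℝ, (k:ℂ)/2 * θ * I = ((k:ℂ)/2 * I) * θ := fun θ => by ring
  rw [intervalIntegral.integral_congr (fun θ _ => by rw [h1 θ])]
  rw [integral_exp_mul_complex hc]
  have h2 : ((k:ℂ)/2 * I) * ((4*π:ℝ):ℂ) = (k:ℤ) * (2*π*I) := by push_cast; ring
  rw [h2, Complex.exp_int_mul_two_pi_mul_I]
  simp

noncomputable def gs (q : ℕ × ℕ → ℂ) (η lam ρ : ℝ) (α : ℕ × ℕ) (θ : ℝ) : ℂ :=
  if 2 ≤ α.1 + α.2 then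
    (q α * (ρ:ℂ)^(α.1+α.2) / (ρ:ℂ) *
      Complex.exp (((((α.1:ℝ)-1)*(η-lam) : ℝ):ℂ) * I)) *
    Complex.exp (((2*α.1+α.2-2 : ℕ):ℂ)/2 * θ * I)
  else 0

lemma gs_eq (q : ℕ × ℕ → ℂ) (η lam ρ : ℝ) (α : ℕ × ℕ) (θ : ℝ) :
    (if 2 ≤ α.1 + α.2 then
      q α * ((ρ:ℂ) * Complex.exp (((η + θ - lam : ℝ):ℂ) * I)) ^ α.1 *
        ((ρ:ℂ) * Complex.exp (((θ/2 : ℝ):ℂ) * I)) ^ α.2 /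
        ((ρ:ℂ) * Complex.exp (((η + θ - lam : ℝ):ℂ) * I)) else 0)
    = gs q η lam ρ α θ := by
  unfold gs
  by_cases h : 2 ≤ α.1 + α.2
  · simp only [h, if_true, auxG (q α) ρ η lam θ α.1 α.2 h]
  · simp [h]

lemma gs_cont (q : ℕ × ℕ → ℂ) (η lam ρ : ℝ) (α : ℕ × ℕ) :
    Continuous (gs q η lam ρ α) := by
  unfold gs
  by_cases h : 2 ≤ α.1 + α.2 <;> simp only [h, if_true, if_false]
  · fun_prop
  · exact continuous_const

lemma gs_norm (q : ℕ × ℕ → ℂ) (η lam ρ : ℝ) (hρ : 0 < ρ) (α : ℕ × ℕ) (θ : ℝ) :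
    ‖gs q η lam ρ α θ‖ ≤ ‖q α‖ * ρ ^ (α.1 + α.2) / ρ := by
  have hb : 0 ≤ ‖q α‖ * ρ ^ (α.1 + α.2) / ρ := by positivity
  unfold gs
  by_cases h : 2 ≤ α.1 + α.2 <;> simp only [h, if_true, if_false]
  · have h1 : ∀ x : ℝ, ‖Complex.exp ((x:ℂ) * I)‖ = 1 :=
      fun x => Complex.norm_exp_ofReal_mul_I x
    have h2 : ‖Complex.exp (((2*α.1+α.2-2 : ℕ):ℂ)/2 * θ * I)‖ = 1 := by
      have : ((2*α.1+α.2-2 : ℕ):ℂ)/2 * θ * I = ((((2*α.1+α.2-2 : ℕ):ℝ)/2 * θ : ℝ):ℂ) * I := by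
        push_cast; ring
      rw [this, h1]
    rw [norm_mul, norm_mul, norm_div, norm_mul, h1, h2, mul_one, mul_one]
    simp [abs_of_pos hρ]
  · simpa using hb

lemma gs_integral (q : ℕ × ℕ → ℂ) (η lam ρ : ℝ) (hρ : 0 < ρ) (α : ℕ × ℕ) :
    ∫ θ in Ioc (0:ℝ) (4*π), gs q η lam ρ α θ
    = if α = (0,2) then ((4*π:ℝ):ℂ) * (q (0,2) * (ρ:ℂ) *
        Complex.exp (((lam-η:ℝ):ℂ)*I)) else 0 := by
  have h4 : (0:ℝ) ≤ 4*π := by positivity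
  have hρ0 : (ρ:ℂ) ≠ 0 := by exact_mod_cast hρ.ne'
  rw [← intervalIntegral.integral_of_le h4]
  by_cases h : 2 ≤ α.1 + α.2
  · by_cases hk : 2*α.1 + α.2 - 2 = 0
    · have hα : α = (0,2) := by
        obtain ⟨a,b⟩ := α
        simp only [Prod.mk.injEq]
        simp only at h hk
        omega
      subst hα
      rw [if_pos rfl]
      simp only [gs]
      norm_num
      field_simp
    · have hα : α ≠ (0,2) := by
        intro hh; subst hh; simp at hk
      rw [if_neg hα]
      simp only [gs, if_pos h]
      rw [intervalIntegral.integral_const_mul, auxA _ hk, mul_zero]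
  · have hα : α ≠ (0,2) := by
      intro hh; subst hh; simp at h
    rw [if_neg hα]
    simp only [gs, if_neg h]
    simp

lemma F_cont (q : ℕ × ℕ → ℂ) (η lam ρ : ℝ) (hρ : 0 < ρ)
    (hsum : Summable (fun α : ℕ × ℕ => ‖q α‖ * ρ ^ (α.1 + α.2))) :
    Continuous (fun θ => ∑' α : ℕ × ℕ, gs q η lam ρ α θ) :=
  continuous_tsum (gs_cont q η lam ρ) (hsum.div_const ρ) (gs_norm q η lam ρ hρ)

lemma F_integral (q : ℕ × ℕ → ℂ) (η lam ρ : ℝ) (hρ : 0 < ρ)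
    (hsum : Summable (fun α : ℕ × ℕ => ‖q α‖ * ρ ^ (α.1 + α.2))) :
    ∫ θ in Ioc (0:ℝ) (4*π), (∑' α : ℕ × ℕ, gs q η lam ρ α θ)
      = ((4*π:ℝ):ℂ) * (q (0,2) * (ρ:ℂ) * Complex.exp (((lam-η:ℝ):ℂ)*I)) := by
  set u : ℕ × ℕ → ℝ := fun α => ‖q α‖ * ρ ^ (α.1 + α.2) / ρ with hu_def
  have hu : Summable u := hsum.div_const ρ
  have hu0 : ∀ α, 0 ≤ u α := fun α => by positivity
  have hb : ∀ α : ℕ × ℕ, ∫⁻ θ in Ioc (0:ℝ) (4*π), ‖gs q η lam ρ α θ‖₊ ∂volume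
      ≤ ENNReal.ofReal (u α) * ENNReal.ofReal (4*π) := by
    intro α
    calc ∫⁻ θ in Ioc (0:ℝ) (4*π), ‖gs q η lam ρ α θ‖₊ ∂volume
        ≤ ∫⁻ _θ in Ioc (0:ℝ) (4*π), ENNReal.ofReal (u α) ∂volume := by
          refine lintegral_mono fun θ => ?_
          rw [← enorm_eq_nnnorm, ← ofReal_norm]
          exact ENNReal.ofReal_le_ofReal (gs_norm q η lam ρ hρ α θ)
      _ = ENNReal.ofReal (u α) * volume (Ioc (0:ℝ) (4*π)) := by
          rw [setLIntegral_const]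
      _ = ENNReal.ofReal (u α) * ENNReal.ofReal (4*π) := by
          rw [Real.volume_Ioc, sub_zero]
  have hf' : ∑' α : ℕ × ℕ, ∫⁻ θ in Ioc (0:ℝ) (4*π), ‖gs q η lam ρ α θ‖₊ ∂volume ≠ ⊤ := by
    refine ne_top_of_le_ne_top ?_ (ENNReal.tsum_le_tsum hb)
    rw [ENNReal.tsum_mul_right, ← ENNReal.ofReal_tsum_of_nonneg hu0 hu]
    exact ENNReal.mul_ne_top ENNReal.ofReal_ne_top ENNReal.ofReal_ne_top
  rw [MeasureTheory.integral_tsum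
    (fun α => (gs_cont q η lam ρ α).aestronglyMeasurable) hf']
  simp only [gs_integral q η lam ρ hρ]
  rw [tsum_ite_eq]

theorem stmt15 (Ω : Set ℂ) (hΩc : Convex ℝ Ω) (hΩo : IsOpen Ω) (h1 : (1:ℂ) ∈ Ω)
    (p : ℂ → ℂ → ℂ) (q : ℕ × ℕ → ℂ) (η : ℝ)
    (hη : q (0, 2) = (‖q (0, 2)‖ : ℂ) * Complex.exp ((η : ℂ) * Complex.I))
    (hsum : ∀ ρ ∈ Ioo (0:ℝ) 1,
      Summable (fun α : ℕ × ℕ => ‖q α‖ * ρ ^ (α.1 + α.2)))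
    (hrep : ∀ z₁ z₂ : ℂ, z₁ ≠ 0 → ‖z₁‖ = ‖z₂‖ →
      ‖z₁‖ < 1 →
      p z₁ z₂ = 1 + ∑' α : ℕ × ℕ,
        (if 2 ≤ α.1 + α.2 then q α * z₁ ^ α.1 * z₂ ^ α.2 / z₁ else 0))
    (hmem : ∀ z₁ z₂ : ℂ, z₁ ≠ 0 → ‖z₁‖ = ‖z₂‖ →
      ‖z₁‖ < 1 → p z₁ z₂ ∈ Ω) :
    (∀ ρ ∈ Ioo (0:ℝ) 1, ∀ lam ∈ Ico (0:ℝ) (2 * π),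
      (1 / (4 * π) : ℝ) • (∫ θ in (0:ℝ)..(4 * π),
          p ((ρ : ℂ) * Complex.exp (((η + θ - lam : ℝ) : ℂ) * Complex.I))
            ((ρ : ℂ) * Complex.exp (((θ / 2 : ℝ) : ℂ) * Complex.I)))
        = 1 + (‖q (0, 2)‖ : ℂ) * (ρ : ℂ) *
            Complex.exp ((lam : ℂ) * Complex.I) ∧
      (1 + (‖q (0, 2)‖ : ℂ) * (ρ : ℂ) *
            Complex.exp ((lam : ℂ) * Complex.I)) ∈ closure Ω) ∧
    ENNReal.ofReal (‖q (0, 2)‖) ≤ EMetric.infEdist 1 (frontier Ω) := by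
  have hπ : (0:ℝ) < π := Real.pi_pos
  have h4 : (0:ℝ) ≤ 4*π := by positivity
  have h4' : (0:ℝ) < 4*π := by positivity
  have key : ∀ ρ ∈ Ioo (0:ℝ) 1, ∀ lam ∈ Ico (0:ℝ) (2 * π),
      (1 / (4 * π) : ℝ) • (∫ θ in (0:ℝ)..(4 * π),
          p ((ρ : ℂ) * Complex.exp (((η + θ - lam : ℝ) : ℂ) * Complex.I))
            ((ρ : ℂ) * Complex.exp (((θ / 2 : ℝ) : ℂ) * Complex.I)))
        = 1 + (‖q (0, 2)‖ : ℂ) * (ρ : ℂ) *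
            Complex.exp ((lam : ℂ) * Complex.I) ∧
      (1 + (‖q (0, 2)‖ : ℂ) * (ρ : ℂ) *
            Complex.exp ((lam : ℂ) * Complex.I)) ∈ closure Ω := by
    rintro ρ ⟨hρ0, hρ1⟩ lam _hlam
    have hρc : (ρ:ℂ) ≠ 0 := by exact_mod_cast hρ0.ne'
    have hz1ne : ∀ θ : ℝ, ((ρ:ℂ) * Complex.exp (((η + θ - lam : ℝ):ℂ) * I)) ≠ 0 :=
      fun θ => mul_ne_zero hρc (Complex.exp_ne_zero _)
    have habs : ∀ x : ℝ, ‖(ρ:ℂ) * Complex.exp ((x:ℂ) * I)‖ = ρ := by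
      intro x
      rw [norm_mul, Complex.norm_exp_ofReal_mul_I, Complex.norm_real, Real.norm_eq_abs, abs_of_pos hρ0, mul_one]
    have hps : ∀ θ : ℝ,
        p ((ρ:ℂ) * Complex.exp (((η + θ - lam : ℝ):ℂ) * I))
          ((ρ:ℂ) * Complex.exp (((θ/2 : ℝ):ℂ) * I))
        = 1 + ∑' α : ℕ × ℕ, gs q η lam ρ α θ := by
      intro θ
      rw [hrep _ _ (hz1ne θ) (by rw [habs, habs]) (by rw [habs]; exact hρ1)]
      congr 1
      exact tsum_congr (fun α => gs_eq q η lam ρ α θ)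
    have hFc : Continuous (fun θ => ∑' α : ℕ × ℕ, gs q η lam ρ α θ) :=
      F_cont q η lam ρ hρ0 (hsum ρ ⟨hρ0, hρ1⟩)
    have hint : (∫ θ in (0:ℝ)..(4 * π),
          p ((ρ:ℂ) * Complex.exp (((η + θ - lam : ℝ):ℂ) * I))
            ((ρ:ℂ) * Complex.exp (((θ/2 : ℝ):ℂ) * I)))
        = ((4*π:ℝ):ℂ) + ((4*π:ℝ):ℂ) * (q (0,2) * (ρ:ℂ) *
            Complex.exp (((lam-η:ℝ):ℂ)*I)) := by
      rw [intervalIntegral.integral_of_le h4]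
      rw [setIntegral_congr_fun measurableSet_Ioc (fun θ _ => hps θ)]
      rw [integral_add (integrableOn_const (C := (1:ℂ)) measure_Ioc_lt_top.ne)
        (hFc.integrableOn_Ioc)]
      rw [setIntegral_const, F_integral q η lam ρ hρ0 (hsum ρ ⟨hρ0, hρ1⟩)]
      rw [measureReal_def, Real.volume_Ioc, sub_zero, ENNReal.toReal_ofReal h4]
      rw [real_smul]
      ring
    have hexpc : Complex.exp ((η:ℂ) * I) * Complex.exp (((lam-η:ℝ):ℂ) * I)
        = Complex.exp ((lam:ℂ) * I) := by
      rw [← Complex.exp_add]; congr 1; push_cast; ring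
    have hval : (1 / (4 * π) : ℝ) • (∫ θ in (0:ℝ)..(4 * π),
          p ((ρ:ℂ) * Complex.exp (((η + θ - lam : ℝ):ℂ) * I))
            ((ρ:ℂ) * Complex.exp (((θ/2 : ℝ):ℂ) * I)))
        = 1 + (‖q (0, 2)‖ : ℂ) * (ρ:ℂ) * Complex.exp ((lam:ℂ) * I) := by
      rw [hint, real_smul]
      conv_lhs => rw [hη]
      rw [← hexpc]
      have h4c : ((4*π:ℝ):ℂ) ≠ 0 := by
        exact_mod_cast (ne_of_gt h4')
      push_cast at h4c ⊢
      field_simp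
    refine ⟨hval, ?_⟩
    have hfs : ∀ᵐ θ ∂(volume.restrict (Ioc (0:ℝ) (4*π))),
        p ((ρ:ℂ) * Complex.exp (((η + θ - lam : ℝ):ℂ) * I))
          ((ρ:ℂ) * Complex.exp (((θ/2 : ℝ):ℂ) * I)) ∈ Ω :=
      ae_of_all _ (fun θ => hmem _ _ (hz1ne θ) (by rw [habs, habs]) (by rw [habs]; exact hρ1))
    have hfi : IntegrableOn (fun θ =>
        p ((ρ:ℂ) * Complex.exp (((η + θ - lam : ℝ):ℂ) * I))
          ((ρ:ℂ) * Complex.exp (((θ/2 : ℝ):ℂ) * I))) (Ioc (0:ℝ) (4*π)) volume := by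
      have : (fun θ => p ((ρ:ℂ) * Complex.exp (((η + θ - lam : ℝ):ℂ) * I))
          ((ρ:ℂ) * Complex.exp (((θ/2 : ℝ):ℂ) * I)))
          = fun θ => 1 + ∑' α : ℕ × ℕ, gs q η lam ρ α θ := funext hps
      rw [this]
      exact (continuous_const.add hFc).integrableOn_Ioc
    have havg := hΩc.set_average_mem_closure (t := Ioc (0:ℝ) (4*π)) (μ := volume)
      (by simp [Real.volume_Ioc, h4', hπ]) (by simp [Real.volume_Ioc, ENNReal.mul_eq_top]) hfs hfi
    rw [setAverage_eq, measureReal_def, Real.volume_Ioc, sub_zero, ENNReal.toReal_ofReal h4] at havg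
    rw [← intervalIntegral.integral_of_le h4] at havg
    rw [← one_div] at havg
    rwa [hval] at havg
  refine ⟨key, ?_⟩
  rcases eq_or_lt_of_le (norm_nonneg (q (0,2))) with hc0 | hc0
  · rw [← hc0]; simp
  have hcl : ∀ z : ℂ, ‖z - 1‖ < ‖q (0,2)‖ → z ∈ closure Ω := by
    intro z hz
    rcases eq_or_ne z 1 with rfl | hz1
    · exact subset_closure h1
    have hd0 : 0 < ‖z - 1‖ := by
      simpa using sub_ne_zero.mpr hz1
    set c := ‖q (0,2)‖ with hc
    set d := ‖z - 1‖ with hd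
    set ρ := d / c with hρdef
    have hρmem : ρ ∈ Ioo (0:ℝ) 1 := ⟨div_pos hd0 hc0, (div_lt_one hc0).mpr hz⟩
    set a := Complex.arg (z - 1) with ha
    set lam := if 0 ≤ a then a else a + 2*π with hlamdef
    have hlam : lam ∈ Ico (0:ℝ) (2*π) := by
      have ha1 := Complex.arg_le_pi (z - 1)
      have ha2 := Complex.neg_pi_lt_arg (z - 1)
      rw [hlamdef]
      split <;> constructor <;> simp only [← ha] at * <;> linarith
    have hexp : Complex.exp ((lam:ℂ) * I) = Complex.exp ((a:ℂ) * I) := by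
      rw [hlamdef]
      split
      · rfl
      · push_cast
        rw [add_mul, Complex.exp_add]
        have h2pi : ((2:ℂ) * π) * I = 2 * π * I := by ring
        rw [h2pi, Complex.exp_two_pi_mul_I, mul_one]
    have hzeq : (1:ℂ) + (c:ℝ) * (ρ:ℝ) * Complex.exp ((lam:ℂ) * I) = z := by
      rw [hexp]
      have h1' : ((c:ℝ):ℂ) * ((ρ:ℝ):ℂ) = ((d:ℝ):ℂ) := by
        have hcne : ((c:ℝ):ℂ) ≠ 0 := by exact_mod_cast hc0.ne'
        rw [hρdef]; push_cast
        rw [mul_comm, div_mul_eq_mul_div, mul_div_assoc, div_self hcne, mul_one]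
      rw [h1']
      have := Complex.norm_mul_exp_arg_mul_I (z - 1)
      rw [← hd, ← ha] at this
      rw [this]; ring
    have := (key ρ hρmem lam hlam).2
    rwa [hzeq] at this
  have hball : ∀ w : ℂ, ‖w - 1‖ < ‖q (0,2)‖ → w ∈ Ω := by
    intro w hw
    rcases eq_or_ne w 1 with rfl | hw1
    · exact h1
    set c := ‖q (0,2)‖ with hc
    set d := ‖w - 1‖ with hd
    have hd0 : 0 < d := by rw [hd]; simpa using sub_ne_zero.mpr hw1
    set c' := (c + d)/2 with hc'
    have hdc' : d < c' := by rw [hc']; linarith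
    have hc'c : c' < c := by rw [hc']; linarith
    have hc'0 : 0 < c' := lt_trans hd0 hdc'
    set t := d / c' with ht
    have ht0 : 0 < t := div_pos hd0 hc'0
    have ht1 : t < 1 := (div_lt_one hc'0).mpr hdc'
    have hzc : ((1:ℂ) + ((c'/d : ℝ):ℂ) * (w - 1)) ∈ closure Ω := by
      apply hcl
      have : (1:ℂ) + ((c'/d : ℝ):ℂ) * (w - 1) - 1 = ((c'/d : ℝ):ℂ) * (w - 1) := by ring
      rw [this, norm_mul, Complex.norm_real, Real.norm_eq_abs, abs_of_pos (div_pos hc'0 hd0), ← hd]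
      rw [div_mul_cancel₀ _ hd0.ne']
      exact hc'c
    have hcombo := hΩc.combo_interior_closure_mem_interior
      (x := (1:ℂ)) (y := (1:ℂ) + ((c'/d : ℝ):ℂ) * (w - 1))
      (by rw [hΩo.interior_eq]; exact h1) hzc
      (a := 1 - t) (b := t) (by linarith) ht0.le (by ring)
    have hwe : (1 - t) • (1:ℂ) + t • ((1:ℂ) + ((c'/d : ℝ):ℂ) * (w - 1)) = w := by
      rw [real_smul, real_smul, ht]
      push_cast
      have hdne : (d:ℂ) ≠ 0 := by exact_mod_cast hd0.ne'
      have hc'ne : (c':ℂ) ≠ 0 := by exact_mod_cast hc'0.ne'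
      field_simp
      ring
    rw [hwe, hΩo.interior_eq] at hcombo
    exact hcombo
  refine Metric.le_infEDist.mpr ?_
  intro w hw
  have hwno : w ∉ Ω := by
    rw [hΩo.frontier_eq] at hw; exact hw.2
  have hge : ‖q (0,2)‖ ≤ ‖w - 1‖ := by
    by_contra hlt
    exact hwno (hball w (lt_of_not_ge hlt))
  rw [edist_dist, Complex.dist_eq]
  refine ENNReal.ofReal_le_ofReal ?_
  have habs' : ‖1 - w‖ = ‖w - 1‖ := by
    rw [← norm_neg, neg_sub]
  rw [habs']
  exact hge
end
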